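/- arXiv:cs/0506087 — 4 statements merged into one kernel-verified Lean document; each statement's English description precedes it below -/
import Mathlib

section
/- Let n, m, d, d^⊥ be positive integers with 1 ≤ m ≤ n−1, d ≥ 1, d^⊥ ≥ 1. If ((2^m − 1)/(2^n − 1)) · Σ_{i=1}^{d−1} C(n,i) + ((2^{n−m} − 1)/(2^n − 1)) · Σ_{i=1}^{d^⊥−1} C(n,i) < 1, then there exists an m-dimensional linear subspace C of GF(2)^n whose minimum Hamming distance is at least d and whose dual distance is at least d^⊥. -/
/-- The dual code of a binary linear code `C ⊆ GF(2)^n`. -/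
def dualCode {n : ℕ} (C : Submodule (ZMod 2) (Fin n → ZMod 2)) :
    Submodule (ZMod 2) (Fin n → ZMod 2) where
  carrier := {u | ∀ v ∈ C, dotProduct u v = 0}
  zero_mem' := by intro v _; simp
  add_mem' := by
    intro a b ha hb v hv
    rw [Set.mem_setOf_eq] at *
    rw [add_dotProduct, ha v hv, hb v hv, add_zero]
  smul_mem' := by
    intro c u hu v hv
    rw [Set.mem_setOf_eq] at *
    rw [smul_dotProduct, hu v hv, smul_zero]

/-- The minimum Hamming distance of the code `C` is at least `d`. -/
def MinDistGE {n : ℕ} (C : Submodule (ZMod 2) (Fin n → ZMod 2)) (d : ℕ) : Prop :=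
  ∀ c ∈ C, c ≠ 0 → d ≤ hammingNorm c

/-!
Average over the set `X` of `m`-dimensional subspaces of `GF(2)^n`. Linear automorphisms act
transitively on nonzero vectors, so every nonzero vector lies in equally many members of `X`, and
double counting makes that number `#X * (2^m - 1) / (2^n - 1)`. As `C ↦ C^⊥` maps `X` bijectively
onto the `(n - m)`-dimensional subspaces, a nonzero vector lies in `C^⊥` for
`#X * (2^(n-m) - 1) / (2^n - 1)` of the `C ∈ X`. Summing over the nonzero words of weight below `d`
(resp. `d^⊥`), the average number of such words in `C` plus in `C^⊥` is the left-hand side of the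
hypothesis, which is `< 1`; hence some `C ∈ X` contains none.
-/

open Module Finset

section Subspaces

variable {K V : Type*} [Field K] [AddCommGroup V] [Module K V]

theorem exists_linearEquiv_apply_eq {v w : V} (hv : v ≠ 0) (hw : w ≠ 0) :
    ∃ g : V ≃ₗ[K] V, g v = w := by
  obtain ⟨g, hg⟩ := Submodule.exists_linearEquiv_restrict_eq
    ((LinearEquiv.toSpanNonzeroSingleton K V v hv).symm ≪≫ₗ
      LinearEquiv.toSpanNonzeroSingleton K V w hw)
  have hgv := hg (LinearEquiv.toSpanNonzeroSingleton K V v hv 1)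
  rw [LinearEquiv.trans_apply, LinearEquiv.symm_apply_apply] at hgv
  exact ⟨g, by simpa using hgv.symm⟩

theorem exists_finrank_eq [FiniteDimensional K V] {k : ℕ} (hk : k ≤ finrank K V) :
    ∃ C : Submodule K V, finrank K C = k := by
  obtain ⟨f, hf⟩ := exists_linearIndependent_of_le_finrank hk
  exact ⟨Submodule.span K (Set.range f), by rw [finrank_span_eq_card hf, Fintype.card_fin]⟩

variable [Fintype V]

variable (K V) in
noncomputable def subspacesOfFinrank (k : ℕ) : Finset (Submodule K V) :=
  {C | finrank K C = k}

@[simp]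
theorem mem_subspacesOfFinrank {k : ℕ} {C : Submodule K V} :
    C ∈ subspacesOfFinrank K V k ↔ finrank K C = k :=
  mem_filter_univ C

open scoped Classical in
theorem card_filter_subspacesOfFinrank_mem_eq {v w : V} (hv : v ≠ 0) (hw : w ≠ 0) (k : ℕ) :
    #{C ∈ subspacesOfFinrank K V k | v ∈ C} = #{C ∈ subspacesOfFinrank K V k | w ∈ C} := by
  obtain ⟨g, rfl⟩ := exists_linearEquiv_apply_eq (K := K) hv hw
  refine card_equiv (Submodule.orderIsoMapComap g).toEquiv fun C => ?_
  simp [LinearEquiv.finrank_map_eq, Submodule.mem_map_equiv]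

variable [Fintype K]

open scoped Classical in
theorem card_filter_ne_zero_mem (C : Submodule K V) :
    #{v : V | v ≠ 0 ∧ v ∈ C} = Fintype.card K ^ finrank K C - 1 := by
  have hC : ({v : V | v ≠ 0 ∧ v ∈ C} : Finset V) = (univ.filter (· ∈ C)).erase 0 := by
    ext v; simp [and_comm]
  rw [hC, card_erase_of_mem (by simp), ← card_eq_pow_finrank, ← Fintype.card_subtype]

open scoped Classical in
theorem card_filter_subspacesOfFinrank_mem_mul {v : V} (hv : v ≠ 0) (k : ℕ) :
    #{C ∈ subspacesOfFinrank K V k | v ∈ C} * (Fintype.card V - 1) =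
      #(subspacesOfFinrank K V k) * (Fintype.card K ^ k - 1) := by
  have h := card_mul_eq_card_mul (fun (w : V) (C : Submodule K V) => w ∈ C)
    (s := {w : V | w ≠ 0}) (t := subspacesOfFinrank K V k)
    (m := #{C ∈ subspacesOfFinrank K V k | v ∈ C}) (n := Fintype.card K ^ k - 1)
    (fun w hw => card_filter_subspacesOfFinrank_mem_eq (mem_filter.1 hw).2 hv k)
    (fun C hC => by
      rw [← mem_subspacesOfFinrank.1 hC, ← card_filter_ne_zero_mem]
      simp [bipartiteBelow, filter_filter])
  rwa [filter_ne', card_erase_of_mem (mem_univ _), card_univ, mul_comm] at h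

open scoped Classical in
theorem sum_card_filter_mem_eq {B : Finset V} (hB : 0 ∉ B) (k : ℕ) :
    ∑ C ∈ subspacesOfFinrank K V k, (#{v ∈ B | v ∈ C} : ℚ) =
      #(subspacesOfFinrank K V k) * #B *
        (((Fintype.card K : ℚ) ^ k - 1) / (Fintype.card V - 1)) := by
  set X := subspacesOfFinrank K V k
  have hcount (v : V) (hv : v ∈ B) : (#{C ∈ X | v ∈ C} : ℚ) =
      #X * (((Fintype.card K : ℚ) ^ k - 1) / (Fintype.card V - 1)) := by
    have hv0 : v ≠ 0 := ne_of_mem_of_not_mem hv hB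
    have hV : (1 : ℚ) < Fintype.card V := by
      have : Nontrivial V := ⟨⟨v, 0, hv0⟩⟩
      exact_mod_cast Fintype.one_lt_card (α := V)
    have h := congrArg (Nat.cast : ℕ → ℚ)
      (card_filter_subspacesOfFinrank_mem_mul (K := K) hv0 k)
    push_cast [Nat.cast_sub (Fintype.card_pos (α := V)),
      Nat.cast_sub (Nat.one_le_pow k _ (Fintype.card_pos (α := K)))] at h
    rw [mul_div_assoc', eq_div_iff (by linarith), h]
  have hswap : ∑ C ∈ X, #{v ∈ B | v ∈ C} = ∑ v ∈ B, #{C ∈ X | v ∈ C} :=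
    (sum_card_bipartiteAbove_eq_sum_card_bipartiteBelow _).symm
  rw_mod_cast [hswap]
  push_cast
  rw [sum_congr rfl hcount, sum_const, nsmul_eq_mul]
  ring

end Subspaces

section DualCode

variable {K ι : Type*} [Field K] [Fintype ι]

theorem dotProductBilin_isRefl :
    LinearMap.BilinForm.IsRefl (dotProductBilin K K : LinearMap.BilinForm K (ι → K)) :=
  fun x y h => by simpa [dotProduct_comm] using h

theorem dotProductBilin_nondegenerate [DecidableEq ι] :
    (dotProductBilin K K : LinearMap.BilinForm K (ι → K)).Nondegenerate :=
  (LinearMap.IsRefl.nondegenerate_iff_separatingLeft (dotProductBilin_isRefl (K := K) (ι := ι))).2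
    fun x hx => funext fun i => by simpa using hx (Pi.single i 1)

variable {n : ℕ}

theorem dualCode_eq_orthogonal (C : Submodule (ZMod 2) (Fin n → ZMod 2)) :
    dualCode C = LinearMap.BilinForm.orthogonal (dotProductBilin (ZMod 2) (ZMod 2)) C := by
  ext u
  simp [dualCode, LinearMap.BilinForm.mem_orthogonal_iff, dotProduct_comm]

theorem finrank_dualCode (C : Submodule (ZMod 2) (Fin n → ZMod 2)) :
    finrank (ZMod 2) (dualCode C) = n - finrank (ZMod 2) C := by
  rw [dualCode_eq_orthogonal, LinearMap.BilinForm.finrank_orthogonal dotProductBilin_nondegenerate,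
    finrank_fin_fun]

theorem dualCode_dualCode (C : Submodule (ZMod 2) (Fin n → ZMod 2)) :
    dualCode (dualCode C) = C := by
  rw [dualCode_eq_orthogonal, dualCode_eq_orthogonal,
    LinearMap.BilinForm.orthogonal_orthogonal dotProductBilin_nondegenerate dotProductBilin_isRefl]

theorem image_dualCode_subspacesOfFinrank {m : ℕ} (hm : m ≤ n) :
    (subspacesOfFinrank (ZMod 2) (Fin n → ZMod 2) m).image dualCode =
      subspacesOfFinrank (ZMod 2) (Fin n → ZMod 2) (n - m) := by
  ext D
  simp only [mem_image, mem_subspacesOfFinrank]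
  refine ⟨?_, fun hD => ⟨dualCode D, ?_, dualCode_dualCode D⟩⟩
  · rintro ⟨C, hC, rfl⟩
    rw [finrank_dualCode, hC]
  · rw [finrank_dualCode, hD]
    omega

open scoped Classical in
theorem sum_card_filter_mem_dualCode {B : Finset (Fin n → ZMod 2)} (hB : 0 ∉ B) {m : ℕ}
    (hm : m ≤ n) :
    ∑ C ∈ subspacesOfFinrank (ZMod 2) (Fin n → ZMod 2) m,
        (#{v ∈ B | v ∈ dualCode C} : ℚ) =
      #(subspacesOfFinrank (ZMod 2) (Fin n → ZMod 2) m) * #B *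
        (((2 : ℚ) ^ (n - m) - 1) / (2 ^ n - 1)) := by
  have hinj : Function.Injective (dualCode (n := n)) :=
    Function.LeftInverse.injective dualCode_dualCode
  rw [← sum_image (f := fun D => (#{v ∈ B | v ∈ D} : ℚ)) hinj.injOn,
    ← card_image_of_injective _ hinj, image_dualCode_subspacesOfFinrank hm,
    sum_card_filter_mem_eq hB]
  simp

end DualCode

section Weight

theorem card_filter_hammingNorm_eq {ι : Type*} [Fintype ι] [DecidableEq ι] (i : ℕ) :
    #{v : ι → ZMod 2 | hammingNorm v = i} = (Fintype.card ι).choose i := by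
  have hbit : ∀ a : ZMod 2, (if a ≠ 0 then (1 : ZMod 2) else 0) = a := by decide
  rw [← card_univ, ← card_powersetCard]
  refine card_nbij' (fun v => ({j | v j ≠ 0} : Finset ι)) (fun s j => if j ∈ s then 1 else 0)
    ?_ ?_ ?_ ?_
  · intro v hv
    simpa [hammingNorm] using hv
  · intro s hs
    simp_all [hammingNorm]
  · intro v _
    funext j
    simpa using hbit (v j)
  · intro s _
    ext j
    by_cases hj : j ∈ s <;> simp [hj]

theorem card_filter_hammingNorm_mem {ι : Type*} [Fintype ι] [DecidableEq ι] (S : Finset ℕ) :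
    #{v : ι → ZMod 2 | hammingNorm v ∈ S} = ∑ i ∈ S, (Fintype.card ι).choose i := by
  rw [card_eq_sum_card_fiberwise (s := {v : ι → ZMod 2 | hammingNorm v ∈ S}) (f := hammingNorm)
    (t := S) fun v hv => (mem_filter.1 hv).2]
  refine sum_congr rfl fun i hi => ?_
  rw [filter_filter, ← card_filter_hammingNorm_eq]
  congr 1
  ext v
  simp only [mem_filter, mem_univ, true_and, and_iff_right_iff_imp]
  rintro rfl
  exact hi

variable {n : ℕ}

variable (n) in
def lowWeightWords (e : ℕ) : Finset (Fin n → ZMod 2) :=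
  {v | hammingNorm v ∈ Icc 1 (e - 1)}

theorem card_lowWeightWords (e : ℕ) :
    #(lowWeightWords n e) = ∑ i ∈ Icc 1 (e - 1), n.choose i := by
  rw [lowWeightWords, card_filter_hammingNorm_mem, Fintype.card_fin]

theorem zero_notMem_lowWeightWords (e : ℕ) : 0 ∉ lowWeightWords n e := by
  simp [lowWeightWords]

open scoped Classical in
theorem card_filter_lowWeightWords_mem_pos_iff {C : Submodule (ZMod 2) (Fin n → ZMod 2)}
    {d : ℕ} : 0 < #{v ∈ lowWeightWords n d | v ∈ C} ↔ ¬ MinDistGE C d := by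
  simp only [card_pos, filter_nonempty_iff, lowWeightWords, mem_filter_univ, mem_Icc, MinDistGE,
    not_forall, not_le, exists_prop]
  constructor
  · rintro ⟨v, ⟨hv1, hvd⟩, hvC⟩
    exact ⟨v, hvC, hammingNorm_pos_iff.1 hv1, by omega⟩
  · rintro ⟨v, hvC, hv0, hvd⟩
    exact ⟨v, ⟨hammingNorm_pos_iff.2 hv0, by omega⟩, hvC⟩

open scoped Classical in
theorem card_filter_lowWeightWords_mem_add_dualCode_pos
    {C : Submodule (ZMod 2) (Fin n → ZMod 2)} {d dp : ℕ}
    (hC : MinDistGE C d → ¬ MinDistGE (dualCode C) dp) :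
    0 < #{v ∈ lowWeightWords n d | v ∈ C} + #{v ∈ lowWeightWords n dp | v ∈ dualCode C} := by
  by_cases hd : MinDistGE C d
  · exact Nat.add_pos_right _ (card_filter_lowWeightWords_mem_pos_iff.2 (hC hd))
  · exact Nat.add_pos_left (card_filter_lowWeightWords_mem_pos_iff.2 hd) _

end Weight

theorem gilbert_varshamov_type_bound_general (n m d dp : ℕ) (hmn : m ≤ n - 1)
    (h : ((2 ^ m - 1 : ℚ) / (2 ^ n - 1)) * ∑ i ∈ Finset.Icc 1 (d - 1), (n.choose i : ℚ) +
        ((2 ^ (n - m) - 1 : ℚ) / (2 ^ n - 1)) * ∑ i ∈ Finset.Icc 1 (dp - 1), (n.choose i : ℚ)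
        < 1) :
    ∃ C : Submodule (ZMod 2) (Fin n → ZMod 2),
      Module.finrank (ZMod 2) C = m ∧ MinDistGE C d ∧ MinDistGE (dualCode C) dp := by
  classical
  by_contra! hbad
  have hm : m ≤ n := hmn.trans (Nat.sub_le n 1)
  set X := subspacesOfFinrank (ZMod 2) (Fin n → ZMod 2) m
  have hX : (0 : ℚ) < #X := by
    obtain ⟨C, hC⟩ :=
      exists_finrank_eq (K := ZMod 2) (V := Fin n → ZMod 2) (by simpa using hm)
    exact_mod_cast card_pos.2 ⟨C, mem_subspacesOfFinrank.2 hC⟩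
  have hcover (C) (hC : C ∈ X) : (1 : ℚ) ≤
      #{v ∈ lowWeightWords n d | v ∈ C} + #{v ∈ lowWeightWords n dp | v ∈ dualCode C} := by
    exact_mod_cast card_filter_lowWeightWords_mem_add_dualCode_pos
      (hbad C (mem_subspacesOfFinrank.1 hC))
  have hlt : (#X : ℚ) < #X := calc
    (#X : ℚ) = ∑ C ∈ X, 1 := by simp
    _ ≤ ∑ C ∈ X, ((#{v ∈ lowWeightWords n d | v ∈ C} : ℚ) +
          #{v ∈ lowWeightWords n dp | v ∈ dualCode C}) := sum_le_sum hcover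
    _ = #X * (((2 ^ m - 1 : ℚ) / (2 ^ n - 1)) * ∑ i ∈ Icc 1 (d - 1), (n.choose i : ℚ) +
          ((2 ^ (n - m) - 1 : ℚ) / (2 ^ n - 1)) *
            ∑ i ∈ Icc 1 (dp - 1), (n.choose i : ℚ)) := by
      rw [sum_add_distrib, sum_card_filter_mem_eq (zero_notMem_lowWeightWords d),
        sum_card_filter_mem_dualCode (zero_notMem_lowWeightWords dp) hm,
        card_lowWeightWords, card_lowWeightWords]
      simp only [Nat.cast_sum, Nat.cast_pow, Nat.cast_ofNat, ZMod.card, Fintype.card_pi,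
        prod_const, card_univ, Fintype.card_fin]
      ring
    _ < #X := mul_lt_of_lt_one_right hX h
  exact lt_irrefl _ hlt

theorem gilbert_varshamov_type_bound (n m d dp : ℕ) (hm : 1 ≤ m) (hmn : m ≤ n - 1)
    (hd : 1 ≤ d) (hdp : 1 ≤ dp)
    (h : ((2 ^ m - 1 : ℚ) / (2 ^ n - 1)) * ∑ i ∈ Finset.Icc 1 (d - 1), (n.choose i : ℚ) +
        ((2 ^ (n - m) - 1 : ℚ) / (2 ^ n - 1)) * ∑ i ∈ Finset.Icc 1 (dp - 1), (n.choose i : ℚ)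
        < 1) :
    ∃ C : Submodule (ZMod 2) (Fin n → ZMod 2),
      Module.finrank (ZMod 2) C = m ∧ MinDistGE C d ∧ MinDistGE (dualCode C) dp :=
  gilbert_varshamov_type_bound_general n m d dp hmn h
end

section
/- Let C be a linear subspace of GF(2)^n with 0 < m = dim C < n, with minimum Hamming distance at least d ≥ 1 and dual distance at least d^⊥ ≥ 1. Then 2n ≥ d + d^⊥ + Σ_{i=1}^{m−1} ⌈d/2^i⌉ + Σ_{i=1}^{n−m−1} ⌈d^⊥/2^i⌉. -/
open Finset Module

namespace Nat

lemma ceilDiv_le_ceilDiv_left {a b : ℕ} (h : a ≤ b) (c : ℕ) : a ⌈/⌉ c ≤ b ⌈/⌉ c :=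
  Nat.div_le_div_right (Nat.sub_le_sub_right (Nat.add_le_add_right h c) 1)

lemma ceilDiv_ceilDiv (a b c : ℕ) : a ⌈/⌉ b ⌈/⌉ c = a ⌈/⌉ (b * c) := by
  rcases b.eq_zero_or_pos with rfl | hb
  · simp
  rcases c.eq_zero_or_pos with rfl | hc
  · simp
  refine eq_of_forall_ge_iff fun x => ?_
  rw [ceilDiv_le_iff_le_mul hc, ceilDiv_le_iff_le_mul hb, ceilDiv_le_iff_le_mul (mul_pos hb hc),
    mul_assoc]

end Nat

lemma Finset.sum_range_eq_add_sum_Icc {M : Type*} [AddCommMonoid M] (f : ℕ → M) {t : ℕ}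
    (ht : 0 < t) : ∑ i ∈ range t, f i = f 0 + ∑ i ∈ Icc 1 (t - 1), f i := by
  obtain ⟨s, rfl⟩ := Nat.exists_eq_add_of_lt ht
  rw [sum_range_eq_add_Ico f ht, zero_add, Nat.add_sub_cancel, Ico_add_one_right_eq_Icc]

section Binary

variable {ι : Type*}

def restrictToZeros (c : ι → ZMod 2) : (ι → ZMod 2) →ₗ[ZMod 2] ({i // c i = 0} → ZMod 2) :=
  LinearMap.funLeft (ZMod 2) (ZMod 2) Subtype.val

lemma restrictToZeros_self (c : ι → ZMod 2) : restrictToZeros c c = 0 :=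
  funext fun i => i.2

variable [Fintype ι]

lemma hammingNorm_restrictToZeros (c y : ι → ZMod 2) :
    hammingNorm (restrictToZeros c y) = #{i | c i = 0 ∧ y i ≠ 0} := by
  rw [hammingNorm, ← Fintype.card_subtype, ← Fintype.card_subtype]
  exact Fintype.card_congr
    (Equiv.subtypeSubtypeEquivSubtypeInter (fun i => c i = 0) (fun i => y i ≠ 0))

lemma hammingNorm_add_hammingNorm_add (c y : ι → ZMod 2) :
    hammingNorm y + hammingNorm (y + c) =
      hammingNorm c + 2 * hammingNorm (restrictToZeros c y) := by
  have pointwise : ∀ a b : ZMod 2,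
      ((if a ≠ 0 then 1 else 0) + (if a + b ≠ 0 then 1 else 0) : ℕ) =
        (if b ≠ 0 then 1 else 0) + 2 * (if b = 0 ∧ a ≠ 0 then 1 else 0) := by
    decide
  rw [hammingNorm_restrictToZeros]
  simp only [hammingNorm, card_filter, mul_sum, ← sum_add_distrib]
  exact sum_congr rfl fun i _ => pointwise (y i) (c i)

lemma card_zeros_add_hammingNorm (c : ι → ZMod 2) :
    Fintype.card {i // c i = 0} + hammingNorm c = Fintype.card ι := by
  rw [hammingNorm, Fintype.card_subtype, Fintype.card, card_filter_add_card_filter_not]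

variable {C : Submodule (ZMod 2) (ι → ZMod 2)}

lemma exists_mem_ne_zero_hammingNorm_le (hC : C ≠ ⊥) :
    ∃ c ∈ C, c ≠ 0 ∧ ∀ x ∈ C, x ≠ 0 → hammingNorm c ≤ hammingNorm x := by
  obtain ⟨x, hx, hx0⟩ := Submodule.exists_mem_ne_zero_of_ne_bot hC
  obtain ⟨c, ⟨hc, hc0⟩, hmin⟩ :=
    Set.exists_min_image {x | x ∈ C ∧ x ≠ 0} hammingNorm (Set.toFinite _) ⟨x, hx, hx0⟩
  exact ⟨c, hc, hc0, fun x hx hx0 => hmin x ⟨hx, hx0⟩⟩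

section Residual

variable {c : ι → ZMod 2} (hc : c ∈ C)
  (hmin : ∀ x ∈ C, x ≠ 0 → hammingNorm c ≤ hammingNorm x)
include hc hmin

lemma eq_zero_or_eq_of_restrictToZeros_eq_zero {y : ι → ZMod 2} (hy : y ∈ C)
    (hy0 : restrictToZeros c y = 0) : y = 0 ∨ y = c := by
  by_contra! h
  have hyc : y + c ≠ 0 := by
    rw [← ZModModule.sub_eq_add, sub_ne_zero]
    exact h.2
  have key := hammingNorm_add_hammingNorm_add c y
  have h1 := hmin y hy h.1
  have h2 := hmin (y + c) (C.add_mem hy hc) hyc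
  have h3 := hammingNorm_pos_iff.mpr h.1
  rw [hy0, hammingNorm_zero] at key
  omega

lemma finrank_map_restrictToZeros_add_one (hc0 : c ≠ 0) :
    finrank (ZMod 2) (C.map (restrictToZeros c)) + 1 = finrank (ZMod 2) C := by
  let f := restrictToZeros c ∘ₗ C.subtype
  have hker : LinearMap.ker f = Submodule.span (ZMod 2) {⟨c, hc⟩} := by
    refine le_antisymm (fun z hz => ?_) ?_
    · rcases eq_zero_or_eq_of_restrictToZeros_eq_zero hc hmin z.2 hz with h | h
      · rw [show z = 0 from Subtype.ext h]
        exact Submodule.zero_mem _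
      · rw [show z = ⟨c, hc⟩ from Subtype.ext h]
        exact Submodule.mem_span_singleton_self _
    · rw [Submodule.span_le, Set.singleton_subset_iff]
      exact restrictToZeros_self c
  have hrange : LinearMap.range f = C.map (restrictToZeros c) := by
    rw [LinearMap.range_comp, Submodule.range_subtype]
  have := LinearMap.finrank_range_add_finrank_ker f
  rwa [hrange, hker, finrank_span_singleton (by simpa using hc0)] at this

lemma ceilDiv_two_le_hammingNorm_restrictToZeros {y : ι → ZMod 2} (hy : y ∈ C)
    (hy0 : restrictToZeros c y ≠ 0) :
    hammingNorm c ⌈/⌉ 2 ≤ hammingNorm (restrictToZeros c y) := by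
  have hy0' : y ≠ 0 := by rintro rfl; exact hy0 (map_zero _)
  have hyc : y + c ≠ 0 := by
    rw [← ZModModule.sub_eq_add, sub_ne_zero]
    rintro rfl
    exact hy0 (restrictToZeros_self y)
  have key := hammingNorm_add_hammingNorm_add c y
  have h1 := hmin y hy hy0'
  have h2 := hmin (y + c) (C.add_mem hy hc) hyc
  rw [ceilDiv_le_iff_le_mul two_pos]
  omega

end Residual

theorem griesmer_bound (C : Submodule (ZMod 2) (ι → ZMod 2)) (d : ℕ)
    (hC : ∀ x ∈ C, x ≠ 0 → d ≤ hammingNorm x) :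
    ∑ i ∈ range (finrank (ZMod 2) C), d ⌈/⌉ 2 ^ i ≤ Fintype.card ι := by
  induction hk : finrank (ZMod 2) C generalizing ι C d with
  | zero => simp
  | succ k ih =>
    have hC0 : C ≠ ⊥ := by
      rintro rfl
      simp at hk
    obtain ⟨c, hc, hc0, hmin⟩ := exists_mem_ne_zero_hammingNorm_le hC0
    have hdc := hC c hc hc0
    have hresidual := ih (C.map (restrictToZeros c)) (hammingNorm c ⌈/⌉ 2)
      (by
        rintro _ ⟨y, hy, rfl⟩ hy0
        exact ceilDiv_two_le_hammingNorm_restrictToZeros hc hmin hy hy0)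
      (by have := finrank_map_restrictToZeros_add_one hc hmin hc0; omega)
    calc ∑ i ∈ range (k + 1), d ⌈/⌉ 2 ^ i
        = ∑ i ∈ range k, d ⌈/⌉ 2 ^ (i + 1) + d := by
          rw [sum_range_succ', pow_zero, ceilDiv_one]
      _ ≤ ∑ i ∈ range k, hammingNorm c ⌈/⌉ 2 ⌈/⌉ 2 ^ i + hammingNorm c := by
          gcongr with i
          rw [Nat.ceilDiv_ceilDiv, ← pow_succ']
          exact Nat.ceilDiv_le_ceilDiv_left hdc _
      _ ≤ Fintype.card {i // c i = 0} + hammingNorm c := by gcongr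
      _ = Fintype.card ι := card_zeros_add_hammingNorm c

end Binary

lemma finrank_dualCode_add_finrank {n : ℕ} (C : Submodule (ZMod 2) (Fin n → ZMod 2)) :
    finrank (ZMod 2) (dualCode C) + finrank (ZMod 2) C = n := by
  have hcomap :
      dualCode C = C.dualAnnihilator.comap (dotProductEquiv (ZMod 2) (Fin n)).toLinearMap := by
    ext u
    simp [dualCode, Submodule.mem_dualAnnihilator]
  rw [hcomap, LinearEquiv.finrank_eq (LinearEquiv.ofSubmodule' _ _), add_comm,
    Subspace.finrank_add_finrank_dualAnnihilator_eq, finrank_fin_fun]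

theorem primal_dual_griesmer_bound_general (n m d dp : ℕ) (C : Submodule (ZMod 2) (Fin n → ZMod 2))
    (hm : Module.finrank (ZMod 2) C = m) (h0 : 0 < m) (hmn : m < n)
    (hC : MinDistGE C d) (hC' : MinDistGE (dualCode C) dp) :
    2 * n ≥ d + dp + (∑ i ∈ Finset.Icc 1 (m - 1), d ⌈/⌉ 2 ^ i) +
      ∑ i ∈ Finset.Icc 1 (n - m - 1), dp ⌈/⌉ 2 ^ i := by
  have hdual : finrank (ZMod 2) (dualCode C) = n - m := by
    have := finrank_dualCode_add_finrank C
    omega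
  have hprimal_bound := griesmer_bound C d hC
  have hdual_bound := griesmer_bound (dualCode C) dp hC'
  rw [hm, sum_range_eq_add_sum_Icc _ h0, Fintype.card_fin] at hprimal_bound
  rw [hdual, sum_range_eq_add_sum_Icc _ (Nat.sub_pos_of_lt hmn), Fintype.card_fin] at hdual_bound
  simp only [pow_zero, ceilDiv_one] at hprimal_bound hdual_bound
  omega

theorem primal_dual_griesmer_bound (n m d dp : ℕ) (C : Submodule (ZMod 2) (Fin n → ZMod 2))
    (hm : Module.finrank (ZMod 2) C = m) (h0 : 0 < m) (hmn : m < n)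
    (hd : 1 ≤ d) (hdp : 1 ≤ dp)
    (hC : MinDistGE C d) (hC' : MinDistGE (dualCode C) dp) :
    2 * n ≥ d + dp + (∑ i ∈ Finset.Icc 1 (m - 1), d ⌈/⌉ 2 ^ i) +
      ∑ i ∈ Finset.Icc 1 (n - m - 1), dp ⌈/⌉ 2 ^ i :=
  primal_dual_griesmer_bound_general n m d dp C hm h0 hmn hC hC'
end

section
/- Let C be a linear subspace of GF(2)^n with 0 < dim C < n, with minimum Hamming distance at least d ≥ 1 and dual distance at least d^⊥ ≥ 1. Then 2^n ≥ ℓ(n,d) · ℓ(n,d^⊥), where ℓ(n,d) = Σ_{i=0}^{(d−1)/2} C(n,i) if d is odd, and ℓ(n,d) = Σ_{i=0}^{d/2−1} C(n,i) + C(n−1, d/2−1) if d is even. -/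
/-- The function `ℓ(n,d)` from the improved Hamming bound. -/
def ell (n d : ℕ) : ℕ :=
  if Odd d then ∑ i ∈ Finset.range ((d - 1) / 2 + 1), n.choose i
  else (∑ i ∈ Finset.range (d / 2 - 1 + 1), n.choose i) + (n - 1).choose (d / 2 - 1)

/-!
Sphere packing on both sides. For minimum distance `2t+1` the Hamming balls of radius `t` around
the codewords are disjoint, so `|C| · V(n,t) ≤ 2^n`, where `V(n,t) = ∑_{i ≤ t} C(n,i)`. For
minimum distance `2t+2`, puncturing at one coordinate is injective on the code and leaves a code
of length `n-1` and minimum distance `2t+1`, so `|C| · 2V(n-1,t) ≤ 2^n`, and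
`2V(n-1,t) = ℓ(n,2t+2)` by Pascal's rule. Thus `|C| · ℓ(n,d) ≤ 2^n` and `|C^⊥| · ℓ(n,d^⊥) ≤ 2^n`;
multiplying the two and using `|C| · |C^⊥| = 2^n` gives the theorem.
-/

open Finset

def hammingVolume (n t : ℕ) : ℕ := ∑ i ∈ range (t + 1), n.choose i

lemma ell_two_mul_add_one (n t : ℕ) : ell n (2 * t + 1) = hammingVolume n t := by
  simp [ell, hammingVolume]

lemma sum_range_choose_succ_add_choose (m t : ℕ) :
    ∑ i ∈ range (t + 1), (m + 1).choose i + m.choose t = 2 * ∑ i ∈ range (t + 1), m.choose i := by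
  induction t with
  | zero => simp
  | succ t ih =>
    rw [sum_range_succ, sum_range_succ (m.choose ·) (t + 1), Nat.choose_succ_succ']
    omega

lemma ell_succ_two_mul_add_two (m t : ℕ) : ell (m + 1) (2 * t + 2) = 2 * hammingVolume m t := by
  have heven : ¬Odd (2 * t + 2) := by rw [Nat.not_odd_iff_even]; exact ⟨t + 1, by ring⟩
  rw [ell, if_neg heven, show (2 * t + 2) / 2 - 1 = t by omega, Nat.add_sub_cancel]
  exact sum_range_choose_succ_add_choose m t

section Binary

variable {ι : Type*} [Fintype ι] [DecidableEq ι]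

lemma card_hammingNorm_eq (i : ℕ) :
    #{x : ι → ZMod 2 | hammingNorm x = i} = (Fintype.card ι).choose i := by
  -- A binary word is the indicator function of its support.
  have hindicator : ∀ a : ZMod 2, (if a ≠ 0 then 1 else 0) = a := by decide
  rw [← card_univ, ← card_powersetCard]
  refine card_nbij' (fun x => ({j | x j ≠ 0} : Finset ι)) (fun s j => if j ∈ s then 1 else 0)
    ?_ ?_ ?_ ?_
  · intro x hx
    simpa [hammingNorm] using hx
  · intro s hs
    simp_all [hammingNorm]
  · intro x _
    funext j
    simpa using hindicator (x j)
  · intro s _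
    ext j
    simp

lemma card_hammingNorm_le (t : ℕ) :
    #{x : ι → ZMod 2 | hammingNorm x ≤ t} = hammingVolume (Fintype.card ι) t := by
  rw [card_eq_sum_card_fiberwise (f := hammingNorm) (t := range (t + 1))]
  · refine sum_congr rfl fun i hi => ?_
    rw [← card_hammingNorm_eq i, filter_filter]
    congr 1
    ext x
    rw [mem_range] at hi
    simp only [mem_filter, mem_univ, true_and]
    omega
  · intro x hx
    simpa [Nat.lt_succ_iff] using hx

lemma card_hammingDist_le (c : ι → ZMod 2) (t : ℕ) :
    #{x | hammingDist x c ≤ t} = hammingVolume (Fintype.card ι) t := by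
  rw [← card_hammingNorm_le]
  refine card_equiv (Equiv.addLeft (-c)) fun x => ?_
  simp only [mem_filter, mem_univ, true_and, Equiv.coe_addLeft]
  rw [hammingDist_comm, hammingDist_eq_hammingNorm]

lemma card_mul_hammingVolume_le {S : Finset (ι → ZMod 2)} {t : ℕ}
    (hS : ∀ c ∈ S, ∀ c' ∈ S, c ≠ c' → 2 * t + 1 ≤ hammingDist c c') :
    #S * hammingVolume (Fintype.card ι) t ≤ 2 ^ Fintype.card ι := by
  let ball c : Finset (ι → ZMod 2) := {x | hammingDist x c ≤ t}
  have hdisj : (S : Set (ι → ZMod 2)).PairwiseDisjoint ball := by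
    intro c hc c' hc' hne
    refine disjoint_left.2 fun x hx hx' => ?_
    simp only [ball, mem_filter, mem_univ, true_and] at hx hx'
    have := hammingDist_triangle_left c c' x
    have := hS c hc c' hc' hne
    omega
  calc #S * hammingVolume (Fintype.card ι) t = ∑ c ∈ S, #(ball c) := by
        simp only [ball, card_hammingDist_le, sum_const, smul_eq_mul]
    _ = #(S.biUnion ball) := (card_biUnion hdisj).symm
    _ ≤ Fintype.card (ι → ZMod 2) := card_le_univ _
    _ = 2 ^ Fintype.card ι := by simp

lemma hammingDist_le_hammingDist_restrict_add_one {β : Type*} [DecidableEq β] (j₀ : ι)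
    (x y : ι → β) :
    hammingDist x y ≤ hammingDist (fun j : {j // j ≠ j₀} => x j) (fun j => y j) + 1 := by
  have hsub : ({j | x j ≠ y j} : Finset ι) ⊆
      insert j₀ (({j | x j ≠ y j} : Finset {j // j ≠ j₀}).map (Function.Embedding.subtype _)) := by
    intro j hj
    by_cases h : j = j₀
    · exact h ▸ mem_insert_self _ _
    · exact mem_insert_of_mem (mem_map.2 ⟨⟨j, h⟩, by simpa using hj, rfl⟩)
  calc hammingDist x y ≤ _ := card_le_card hsub
    _ ≤ _ := card_insert_le _ _
    _ = _ := by rw [card_map]; rfl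

lemma card_mul_two_mul_hammingVolume_le (j₀ : ι) {S : Finset (ι → ZMod 2)} {t : ℕ}
    (hS : ∀ c ∈ S, ∀ c' ∈ S, c ≠ c' → 2 * t + 2 ≤ hammingDist c c') :
    #S * (2 * hammingVolume (Fintype.card ι - 1) t) ≤ 2 ^ Fintype.card ι := by
  let puncture (x : ι → ZMod 2) (j : {j // j ≠ j₀}) : ZMod 2 := x j
  have hpunct : ∀ c ∈ S, ∀ c' ∈ S, c ≠ c' → 2 * t + 1 ≤ hammingDist (puncture c) (puncture c') :=
    fun c hc c' hc' hne => by
      have := hammingDist_le_hammingDist_restrict_add_one j₀ c c'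
      have := hS c hc c' hc' hne
      dsimp only [puncture]
      omega
  have hinj : Set.InjOn puncture S := fun c hc c' hc' heq => by
    by_contra hne
    have := hpunct c hc c' hc' hne
    rw [heq, hammingDist_self] at this
    omega
  have hpacking := card_mul_hammingVolume_le (S := S.image puncture) (t := t) <| by
    simp only [mem_image]
    rintro _ ⟨c, hc, rfl⟩ _ ⟨c', hc', rfl⟩ hne
    exact hpunct c hc c' hc' fun h => hne (h ▸ rfl)
  have hcard : Fintype.card {j // j ≠ j₀} + 1 = Fintype.card ι := by
    simp [Fintype.card_subtype_compl, Nat.sub_add_cancel (Fintype.card_pos_iff.2 ⟨j₀⟩)]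
  rw [card_image_of_injOn hinj] at hpacking
  rw [← hcard, pow_succ, Nat.add_sub_cancel]
  linarith

end Binary

section Code

variable {n : ℕ} {C : Submodule (ZMod 2) (Fin n → ZMod 2)}

lemma MinDistGE.le_hammingDist {d : ℕ} (hC : MinDistGE C d) {c c' : Fin n → ZMod 2}
    (hc : c ∈ C) (hc' : c' ∈ C) (hne : c ≠ c') : d ≤ hammingDist c c' := by
  rw [hammingDist_eq_hammingNorm]
  exact hC _ (C.add_mem (C.neg_mem hc) hc') fun h => hne (neg_add_eq_zero.1 h)

lemma MinDistGE.natCard_mul_ell_le {d : ℕ} (hn : 0 < n) (hd : 1 ≤ d) (hC : MinDistGE C d) :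
    Nat.card C * ell n d ≤ 2 ^ n := by
  classical
  let S : Finset (Fin n → ZMod 2) := {x | x ∈ C}
  have hS : Nat.card C = #S := by rw [Nat.card_eq_fintype_card, Fintype.card_subtype]
  have hdist : ∀ c ∈ S, ∀ c' ∈ S, c ≠ c' → d ≤ hammingDist c c' := fun c hc c' hc' =>
    hC.le_hammingDist (mem_filter.1 hc).2 (mem_filter.1 hc').2
  obtain ⟨t, rfl | rfl⟩ : ∃ t, d = 2 * t + 1 ∨ d = 2 * t + 2 := ⟨(d - 1) / 2, by omega⟩
  · rw [ell_two_mul_add_one, hS]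
    simpa using card_mul_hammingVolume_le hdist
  · obtain ⟨m, rfl⟩ := Nat.exists_eq_add_one_of_ne_zero hn.ne'
    rw [ell_succ_two_mul_add_two, hS]
    simpa using card_mul_two_mul_hammingVolume_le 0 hdist

lemma dualCode_eq_comap_dualAnnihilator (C : Submodule (ZMod 2) (Fin n → ZMod 2)) :
    dualCode C = C.dualAnnihilator.comap (dotProductEquiv (ZMod 2) (Fin n)).toLinearMap := by
  ext u
  simp [dualCode]

lemma finrank_add_finrank_dualCode (C : Submodule (ZMod 2) (Fin n → ZMod 2)) :
    Module.finrank (ZMod 2) C + Module.finrank (ZMod 2) (dualCode C) = n := by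
  rw [dualCode_eq_comap_dualAnnihilator, Submodule.comap_equiv_eq_map_symm,
    LinearEquiv.finrank_map_eq, Subspace.finrank_add_finrank_dualAnnihilator_eq,
    Module.finrank_fin_fun]

lemma natCard_mul_natCard_dualCode (C : Submodule (ZMod 2) (Fin n → ZMod 2)) :
    Nat.card C * Nat.card (dualCode C) = 2 ^ n := by
  rw [Module.natCard_eq_pow_finrank (K := ZMod 2) (V := C),
    Module.natCard_eq_pow_finrank (K := ZMod 2) (V := dualCode C), Nat.card_zmod, ← pow_add,
    finrank_add_finrank_dualCode]

end Code

theorem primal_dual_improved_hamming_bound_general (n d dp : ℕ)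
    (C : Submodule (ZMod 2) (Fin n → ZMod 2))
    (h1 : Module.finrank (ZMod 2) C < n)
    (hd : 1 ≤ d) (hdp : 1 ≤ dp)
    (hC : MinDistGE C d) (hC' : MinDistGE (dualCode C) dp) :
    2 ^ n ≥ ell n d * ell n dp := by
  have hn : 0 < n := Nat.zero_lt_of_lt h1
  have hprimal := hC.natCard_mul_ell_le hn hd
  have hdual := hC'.natCard_mul_ell_le hn hdp
  have key : ell n d * ell n dp * 2 ^ n ≤ 2 ^ n * 2 ^ n :=
    calc ell n d * ell n dp * 2 ^ n
        = (Nat.card C * ell n d) * (Nat.card (dualCode C) * ell n dp) := by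
          rw [← natCard_mul_natCard_dualCode C]; ring
      _ ≤ 2 ^ n * 2 ^ n := Nat.mul_le_mul hprimal hdual
  exact Nat.le_of_mul_le_mul_right key (by positivity)

theorem primal_dual_improved_hamming_bound (n d dp : ℕ)
    (C : Submodule (ZMod 2) (Fin n → ZMod 2))
    (h0 : 0 < Module.finrank (ZMod 2) C) (h1 : Module.finrank (ZMod 2) C < n)
    (hd : 1 ≤ d) (hdp : 1 ≤ dp)
    (hC : MinDistGE C d) (hC' : MinDistGE (dualCode C) dp) :
    2 ^ n ≥ ell n d * ell n dp :=
  primal_dual_improved_hamming_bound_general n d dp C h1 hd hdp hC hC'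
end

section
/- N(3, 3) = 6; that is, 6 is the minimum length n for which there exists a binary linear code of length n with minimum Hamming distance at least 3 and dual distance at least 3 (attained by the [6,3,3] shortened Hamming code). -/
/-- `N d d⊥` is the minimum length `n` for which there exists a binary linear code of
length `n` (a subspace `C` of `GF(2)^n` with `0 < dim C < n`) with minimum Hamming
distance at least `d` and dual distance at least `d⊥`. -/
noncomputable def N (d dp : ℕ) : ℕ :=
  sInf {n | ∃ C : Submodule (ZMod 2) (Fin n → ZMod 2),
    0 < Module.finrank (ZMod 2) C ∧ Module.finrank (ZMod 2) C < n ∧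
    MinDistGE C d ∧ MinDistGE (dualCode C) dp}

open Module

lemma hammingNorm_sub_le {ι G : Type*} [Fintype ι] [AddCommGroup G] [DecidableEq G]
    (x y : ι → G) :
    hammingNorm (x - y) ≤ hammingNorm x + hammingNorm y :=
  calc hammingNorm (x - y) = hammingDist y x := by rw [hammingDist_eq_hammingNorm, sub_eq_neg_add]
    _ ≤ hammingDist y 0 + hammingDist 0 x := hammingDist_triangle y 0 x
    _ = hammingNorm x + hammingNorm y := by
      rw [hammingDist_zero_right, hammingDist_zero_left, add_comm]

section

variable {n : ℕ}

lemma dualCode_eq_ker (C : Submodule (ZMod 2) (Fin n → ZMod 2)) :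
    dualCode C = LinearMap.ker ((dotProductBilin (ZMod 2) (ZMod 2)).compl₂ C.subtype) := by
  ext u
  simp [dualCode, LinearMap.ext_iff]

lemma le_finrank_add_finrank_dualCode (C : Submodule (ZMod 2) (Fin n → ZMod 2)) :
    n ≤ finrank (ZMod 2) C + finrank (ZMod 2) (dualCode C) := by
  rw [dualCode_eq_ker]
  set f := (dotProductBilin (ZMod 2) (ZMod 2)).compl₂ C.subtype
  have hrank := f.finrank_range_add_finrank_ker
  have hrange : finrank (ZMod 2) f.range ≤ finrank (ZMod 2) C :=
    (Submodule.finrank_le f.range).trans Subspace.dual_finrank_eq.le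
  simp only [finrank_fin_fun] at hrank
  omega

lemma mem_dualCode_span_iff {ι : Type*} (v : ι → Fin n → ZMod 2) (u : Fin n → ZMod 2) :
    u ∈ dualCode (Submodule.span (ZMod 2) (Set.range v)) ↔ ∀ i, u ⬝ᵥ v i = 0 := by
  refine ⟨fun h i => h _ (Submodule.subset_span ⟨i, rfl⟩), fun h w hw => ?_⟩
  have hker : Submodule.span (ZMod 2) (Set.range v) ≤
      LinearMap.ker (dotProductBilin (ZMod 2) (ZMod 2) u) :=
    Submodule.span_le.2 (Set.range_subset_iff.2 h)
  exact hker hw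

def singleErrorPattern : Option (Fin n) → Fin n → ZMod 2 := fun o => o.elim 0 (Pi.single · 1)

lemma singleErrorPattern_injective : Function.Injective (singleErrorPattern (n := n)) := by
  rintro (_ | i) (_ | j) h
  · rfl
  · simpa [singleErrorPattern] using congrFun h j
  · simpa [singleErrorPattern] using congrFun h i
  · simpa [singleErrorPattern, Pi.single_apply, eq_comm] using congrFun h i

lemma hammingNorm_singleErrorPattern_le (o : Option (Fin n)) :
    hammingNorm (singleErrorPattern o) ≤ 1 := by
  rcases o with _ | i
  · simp [singleErrorPattern]
  · refine Finset.card_le_one.2 fun a ha b hb => ?_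
    simp_all [singleErrorPattern, Pi.single_apply]

lemma two_pow_finrank_mul_succ_le {C : Submodule (ZMod 2) (Fin n → ZMod 2)}
    (hC : MinDistGE C 3) :
    2 ^ finrank (ZMod 2) C * (n + 1) ≤ 2 ^ n := by
  have hinj : Function.Injective fun p : C × Option (Fin n) =>
      (p.1 : Fin n → ZMod 2) + singleErrorPattern p.2 := by
    rintro ⟨c, o⟩ ⟨c', o'⟩ (h : (c : Fin n → ZMod 2) + _ = c' + _)
    have hdiff : (c - c' : Fin n → ZMod 2) = singleErrorPattern o' - singleErrorPattern o := by
      rw [sub_eq_sub_iff_add_eq_add, h, add_comm]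
    have hsmall : hammingNorm (c - c' : Fin n → ZMod 2) < 3 := by
      have := hammingNorm_sub_le (singleErrorPattern o') (singleErrorPattern o)
      have := hammingNorm_singleErrorPattern_le o
      have := hammingNorm_singleErrorPattern_le o'
      rw [hdiff]
      omega
    have hcc' : c = c' := by
      by_contra hne
      exact hsmall.not_ge (hC _ (C.sub_mem c.2 c'.2) (sub_ne_zero.2 (Subtype.coe_ne_coe.2 hne)))
    subst hcc'
    simpa using singleErrorPattern_injective (add_left_cancel h)
  have := Nat.card_le_card_of_injective _ hinj
  simpa [Nat.card_prod, Finite.card_option, natCard_eq_pow_finrank (K := ZMod 2)] using this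

lemma succ_sq_le_two_pow {C : Submodule (ZMod 2) (Fin n → ZMod 2)} (hC : MinDistGE C 3)
    (hD : MinDistGE (dualCode C) 3) : (n + 1) ^ 2 ≤ 2 ^ n := by
  have hdim := le_finrank_add_finrank_dualCode C
  refine Nat.le_of_mul_le_mul_left ?_ (Nat.two_pow_pos n)
  calc 2 ^ n * (n + 1) ^ 2
      ≤ 2 ^ (finrank (ZMod 2) C + finrank (ZMod 2) (dualCode C)) * (n + 1) ^ 2 := by
        gcongr; norm_num
    _ = (2 ^ finrank (ZMod 2) C * (n + 1)) * (2 ^ finrank (ZMod 2) (dualCode C) * (n + 1)) := by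
        ring
    _ ≤ 2 ^ n * 2 ^ n :=
        Nat.mul_le_mul (two_pow_finrank_mul_succ_le hC) (two_pow_finrank_mul_succ_le hD)

end

def shortenedHammingGen : Fin 3 → Fin 6 → ZMod 2 :=
  ![![1, 0, 0, 0, 1, 1], ![0, 1, 0, 1, 0, 1], ![0, 0, 1, 1, 1, 0]]

def shortenedHammingCode : Submodule (ZMod 2) (Fin 6 → ZMod 2) :=
  Submodule.span (ZMod 2) (Set.range shortenedHammingGen)

lemma finrank_shortenedHammingCode : finrank (ZMod 2) shortenedHammingCode = 3 := by
  refine (finrank_span_eq_card (Fintype.linearIndependent_iff.2 ?_)).trans (Fintype.card_fin 3)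
  unfold shortenedHammingGen
  decide

lemma minDistGE_shortenedHammingCode : MinDistGE shortenedHammingCode 3 := by
  intro c hc
  obtain ⟨a, rfl⟩ := (Submodule.mem_span_range_iff_exists_fun _).1 hc
  clear hc
  revert a
  unfold shortenedHammingGen
  decide

lemma minDistGE_dualCode_shortenedHammingCode : MinDistGE (dualCode shortenedHammingCode) 3 := by
  intro u hu
  rw [shortenedHammingCode, mem_dualCode_span_iff] at hu
  revert u
  unfold shortenedHammingGen
  decide

theorem N_three_three : N 3 3 = 6 := by
  refine IsLeast.csInf_eq ⟨?_, ?_⟩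
  · exact ⟨shortenedHammingCode, by simp [finrank_shortenedHammingCode],
      by simp [finrank_shortenedHammingCode], minDistGE_shortenedHammingCode,
      minDistGE_dualCode_shortenedHammingCode⟩
  · rintro n ⟨C, -, hkn, hC, hD⟩
    have hn0 : 0 < n := Nat.zero_lt_of_lt hkn
    have hsq := succ_sq_le_two_pow hC hD
    by_contra! hn
    interval_cases n <;> norm_num at hsq
end
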